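/- Let k ≤ n and σ ∈ S_k, and let X = (x_1,...,x_n) be uniform on the unit sphere of ℂ^n. Then E[∏_{i=1}^k (δ_{i,σ(i)} - x_i·conj(x_{σ(i)}))] = Σ_{t=0}^{fix(σ)} (-1)^{k-t} C(fix(σ),t)/n^{↑(k-t)}. -/

import Mathlib

/-!
Expanding the product, a term in which some factor `δ_{i,σ(i)}` with `σ i ≠ i` is chosen
vanishes; for a set `T` of fixed points, `σ` permutes the complement of `T`, so the remaining
factor is `∏_{i ∉ T} |x_i|²`. Everything thus reduces to the moments `E[P_S] = 1 / n^{↑|S|}` of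
`P_S = ∏_{i ∈ S} |x_i|²`, which follow from unitary invariance by induction on `|S|`:
multiplying by `∑_j |x_j|² = 1` gives `E[P_S] = (n + |S|) E[P_{S ∪ {b}}]` for `b ∉ S`. The terms
with `j ∉ S` are handled by permuting coordinates, those with `j ∈ S` by the identity
`E[|x_j|⁴ R] = 2 E[|x_j|² |x_b|² R]`, which comes from rotating the `(j, b)`-plane by a Hadamard
gate: the cross terms it creates are odd under a phase change of `x_j`.
-/

open MeasureTheory Finset

/-- Rising factorial `n^{↑m} = n(n+1)⋯(n+m-1)` as a complex number. -/
noncomputable def ascC (n m : ℕ) : ℂ := ∏ j ∈ Finset.range m, ((n : ℂ) + j)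

open Matrix ComplexConjugate

lemma inv_sqrt_two_mul_self : (Real.sqrt 2 : ℂ)⁻¹ * (Real.sqrt 2 : ℂ)⁻¹ = 1 / 2 := by
  rw [← mul_inv, ← Complex.ofReal_mul, Real.mul_self_sqrt zero_le_two]
  norm_num

lemma mul_conj_sq_inv_sqrt_two_mul_add (u v : ℂ) :
    ((Real.sqrt 2 : ℂ)⁻¹ * (u + v) * conj ((Real.sqrt 2 : ℂ)⁻¹ * (u + v))) ^ 2
      = 1 / 4 * (u * conj u) ^ 2 + 1 / 4 * (v * conj v) ^ 2 + u * conj u * (v * conj v)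
        + 1 / 2 * ((u * conj u + v * conj v) * (u * conj v + v * conj u))
        + 1 / 4 * ((u * conj v) ^ 2 + (v * conj u) ^ 2) := by
  simp only [map_mul, map_add, map_inv₀, Complex.conj_ofReal]
  linear_combination ((Real.sqrt 2 : ℂ)⁻¹ * (Real.sqrt 2 : ℂ)⁻¹ + 1 / 2)
    * ((u + v) * (conj u + conj v)) ^ 2 * inv_sqrt_two_mul_self

section UnitaryMatrices

variable {ι : Type*} [DecidableEq ι]

noncomputable def hadamardGate (a b : ι) : Matrix ι ι ℂ :=
  let e : Matrix ι ι ℂ := 1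
  Matrix.of fun i j =>
    if i = a then (Real.sqrt 2 : ℂ)⁻¹ * (e a j + e b j)
    else if i = b then (Real.sqrt 2 : ℂ)⁻¹ * (e a j - e b j)
    else e i j

lemma star_hadamardGate (a b : ι) : star (hadamardGate a b) = hadamardGate a b := by
  ext i j
  simp only [star_apply, hadamardGate, of_apply, one_apply]
  split_ifs <;> subst_vars <;> simp_all [Complex.conj_ofReal]

variable [Fintype ι]

lemma hadamardGate_mulVec {a b : ι} (hab : a ≠ b) (x : ι → ℂ) :
    hadamardGate a b *ᵥ x = Function.update (Function.update x a
      ((Real.sqrt 2 : ℂ)⁻¹ * (x a + x b))) b ((Real.sqrt 2 : ℂ)⁻¹ * (x a - x b)) := by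
  ext i
  rcases eq_or_ne i b with rfl | hib
  · simp [hadamardGate, mulVec, dotProduct, hab.symm, one_apply, mul_sub, sub_mul,
      sum_sub_distrib]
  rcases eq_or_ne i a with rfl | hia
  · simp [hadamardGate, mulVec, dotProduct, hab, one_apply, mul_add, add_mul, sum_add_distrib]
  · simp [hadamardGate, mulVec, dotProduct, hia, hib, one_apply]

lemma hadamardGate_mem_unitaryGroup {a b : ι} (hab : a ≠ b) :
    hadamardGate a b ∈ unitaryGroup ι ℂ := by
  rw [mem_unitaryGroup_iff', star_hadamardGate, ext_iff_mulVec]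
  intro x
  rw [← mulVec_mulVec, hadamardGate_mulVec hab, hadamardGate_mulVec hab, one_mulVec]
  ext i
  rcases eq_or_ne i b with rfl | hib
  · simp only [Function.update_self, Function.update_of_ne hab]
    linear_combination (2 * x i) * inv_sqrt_two_mul_self
  rcases eq_or_ne i a with rfl | hia
  · simp only [Function.update_self, Function.update_of_ne hab]
    linear_combination (2 * x i) * inv_sqrt_two_mul_self
  · simp only [Function.update_of_ne hia, Function.update_of_ne hib]

lemma permMatrix_mem_unitaryGroup (σ : Equiv.Perm ι) : σ.permMatrix ℂ ∈ unitaryGroup ι ℂ := by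
  rw [mem_unitaryGroup_iff', star_eq_conjTranspose, conjTranspose_permMatrix, ← permMatrix_mul,
    mul_inv_cancel, permMatrix_one]

lemma diagonal_mem_unitaryGroup {d : ι → ℂ} (hd : ∀ i, conj (d i) * d i = 1) :
    diagonal d ∈ unitaryGroup ι ℂ := by
  rw [mem_unitaryGroup_iff', star_eq_conjTranspose, diagonal_conjTranspose, diagonal_mul_diagonal]
  exact congrArg diagonal (funext hd)

end UnitaryMatrices

section Sphere

variable {ι : Type*} [Fintype ι]

lemma integrable_of_continuous {μ : Measure (ι → ℂ)} [IsFiniteMeasure μ]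
    (hsph : ∀ᵐ x ∂μ, ∑ i, ‖x i‖ ^ 2 = 1) {f : (ι → ℂ) → ℂ} (hf : Continuous f) :
    Integrable f μ := by
  have hball : ∀ᵐ x ∂μ, x ∈ Metric.closedBall (0 : ι → ℂ) 1 := by
    filter_upwards [hsph] with x hx
    rw [mem_closedBall_zero_iff, pi_norm_le_iff_of_nonneg zero_le_one]
    intro i
    refine (sq_le_one_iff₀ (norm_nonneg _)).mp ?_
    exact hx ▸ single_le_sum (f := fun j => ‖x j‖ ^ 2) (fun j _ => by positivity) (mem_univ i)
  obtain ⟨C, hC⟩ := (isCompact_closedBall (0 : ι → ℂ) 1).exists_bound_of_continuousOn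
    hf.continuousOn
  exact .of_bound hf.aestronglyMeasurable C (hball.mono hC)

lemma integral_eq_sum_integral_mul_conj_mul {μ : Measure (ι → ℂ)} [IsFiniteMeasure μ]
    (hsph : ∀ᵐ x ∂μ, ∑ i, ‖x i‖ ^ 2 = 1) {f : (ι → ℂ) → ℂ} (hf : Continuous f) :
    ∫ x, f x ∂μ = ∑ j, ∫ x, x j * conj (x j) * f x ∂μ := by
  rw [← integral_finsetSum _ fun j _ => integrable_of_continuous hsph (by fun_prop)]
  refine integral_congr_ae ?_
  filter_upwards [hsph] with x hx
  simp only [← sum_mul, Complex.mul_conj, Complex.normSq_eq_norm_sq]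
  rw [← Complex.ofReal_sum, hx, Complex.ofReal_one, one_mul]

variable [DecidableEq ι]

def IsUnitarilyInvariant (μ : Measure (ι → ℂ)) : Prop :=
  ∀ U : unitaryGroup ι ℂ, MeasurePreserving (fun x => (U : Matrix ι ι ℂ) *ᵥ x) μ μ

namespace IsUnitarilyInvariant

variable {μ : Measure (ι → ℂ)} {f : (ι → ℂ) → ℂ}

lemma integral_comp (hμ : IsUnitarilyInvariant μ) (U : unitaryGroup ι ℂ) (hf : Continuous f) :
    ∫ x, f ((U : Matrix ι ι ℂ) *ᵥ x) ∂μ = ∫ x, f x ∂μ := by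
  conv_rhs => rw [← (hμ U).map_eq]
  exact (integral_map (by fun_prop) hf.aestronglyMeasurable).symm

lemma integral_comp_perm (hμ : IsUnitarilyInvariant μ) (σ : Equiv.Perm ι) (hf : Continuous f) :
    ∫ x, f (x ∘ σ) ∂μ = ∫ x, f x ∂μ := by
  simpa [permMatrix_mulVec] using hμ.integral_comp ⟨_, permMatrix_mem_unitaryGroup σ⟩ hf

lemma integral_comp_hadamardGate (hμ : IsUnitarilyInvariant μ) {a b : ι} (hab : a ≠ b)
    (hf : Continuous f) :
    ∫ x, f (Function.update (Function.update x a ((Real.sqrt 2 : ℂ)⁻¹ * (x a + x b))) b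
      ((Real.sqrt 2 : ℂ)⁻¹ * (x a - x b))) ∂μ = ∫ x, f x ∂μ := by
  simpa [hadamardGate_mulVec hab] using
    hμ.integral_comp ⟨_, hadamardGate_mem_unitaryGroup hab⟩ hf

lemma integral_eq_zero_of_phase_odd (hμ : IsUnitarilyInvariant μ) (a : ι) {u : ℂ}
    (hu : conj u * u = 1) (hf : Continuous f)
    (hodd : ∀ x, f (Function.update x a (u * x a)) = -f x) : ∫ x, f x ∂μ = 0 := by
  set d := Function.update (1 : ι → ℂ) a u
  have hd : ∀ i, conj (d i) * d i = 1 := by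
    intro i
    rcases eq_or_ne i a with rfl | hi <;> simp [d, *]
  have hphase : ∀ x : ι → ℂ, diagonal d *ᵥ x = Function.update x a (u * x a) := by
    intro x
    ext i
    rcases eq_or_ne i a with rfl | hi <;> simp [d, mulVec_diagonal, *]
  have h := hμ.integral_comp ⟨_, diagonal_mem_unitaryGroup hd⟩ hf
  simp only [hphase, hodd, integral_neg] at h
  exact neg_eq_self.mp h

end IsUnitarilyInvariant

end Sphere

section ProdNormSq

variable {ι : Type*}

def prodNormSq (S : Finset ι) (x : ι → ℂ) : ℂ := ∏ i ∈ S, x i * conj (x i)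

@[fun_prop]
lemma continuous_prodNormSq (S : Finset ι) : Continuous (prodNormSq S) := by
  unfold prodNormSq
  fun_prop

lemma prodNormSq_congr {S : Finset ι} {x y : ι → ℂ} (h : ∀ i ∈ S, y i = x i) :
    prodNormSq S y = prodNormSq S x :=
  prod_congr rfl fun i hi => by rw [h i hi]

variable [DecidableEq ι]

lemma prodNormSq_insert {S : Finset ι} {a : ι} (ha : a ∉ S) (x : ι → ℂ) :
    prodNormSq (insert a S) x = x a * conj (x a) * prodNormSq S x :=
  prod_insert ha

lemma prodNormSq_update {S : Finset ι} {a : ι} (ha : a ∉ S) (x : ι → ℂ) (u : ℂ) :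
    prodNormSq S (Function.update x a u) = prodNormSq S x :=
  prodNormSq_congr fun _ hi => Function.update_of_ne (ne_of_mem_of_not_mem hi ha) _ _

end ProdNormSq

section Moments

variable {ι : Type*} [Fintype ι] [DecidableEq ι] {μ : Measure (ι → ℂ)}

lemma integral_apply_mul_prodNormSq_eq (hμ : IsUnitarilyInvariant μ)
    {g : ℂ → ℂ} (hg : Continuous g) {S : Finset ι} {a b : ι} (ha : a ∉ S) (hb : b ∉ S) :
    ∫ x, g (x a) * prodNormSq S x ∂μ = ∫ x, g (x b) * prodNormSq S x ∂μ := by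
  refine Eq.trans ?_ (hμ.integral_comp_perm (Equiv.swap a b) (by fun_prop))
  refine integral_congr_ae (Filter.Eventually.of_forall fun x => ?_)
  dsimp only
  rw [Function.comp_apply, Equiv.swap_apply_right]
  congr 1
  exact (prodNormSq_congr fun i hi => congrArg x (Equiv.swap_apply_of_ne_of_ne
    (ne_of_mem_of_not_mem hi ha) (ne_of_mem_of_not_mem hi hb))).symm

lemma integral_sq_mul_prodNormSq [IsFiniteMeasure μ] (hsph : ∀ᵐ x ∂μ, ∑ i, ‖x i‖ ^ 2 = 1)
    (hμ : IsUnitarilyInvariant μ) {a b : ι} {S : Finset ι} (hab : a ≠ b) (ha : a ∉ S)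
    (hb : b ∉ S) :
    ∫ x, (x a * conj (x a)) ^ 2 * prodNormSq S x ∂μ
      = 2 * ∫ x, x a * conj (x a) * (x b * conj (x b)) * prodNormSq S x ∂μ := by
  have hI : ∀ {f : (ι → ℂ) → ℂ}, Continuous f → Integrable f μ := integrable_of_continuous hsph
  have hodd₁ : ∫ x, (x a * conj (x a) + x b * conj (x b)) * (x a * conj (x b) + x b * conj (x a))
      * prodNormSq S x ∂μ = 0 := by
    refine hμ.integral_eq_zero_of_phase_odd a (u := -1) (by simp) (by fun_prop) fun x => ?_
    simp only [Function.update_self, Function.update_of_ne hab.symm, prodNormSq_update ha,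
      map_mul, map_neg, map_one]
    ring
  have hodd₂ : ∫ x, ((x a * conj (x b)) ^ 2 + (x b * conj (x a)) ^ 2) * prodNormSq S x ∂μ = 0 := by
    refine hμ.integral_eq_zero_of_phase_odd a (u := Complex.I) (by simp) (by fun_prop) fun x => ?_
    simp only [Function.update_self, Function.update_of_ne hab.symm, prodNormSq_update ha,
      map_mul, Complex.conj_I]
    linear_combination ((x a * conj (x b)) ^ 2 + (x b * conj (x a)) ^ 2) * prodNormSq S x *
      Complex.I_sq
  have hswap := integral_apply_mul_prodNormSq_eq hμ (g := fun z => (z * conj z) ^ 2)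
    (by fun_prop) hb ha
  have hrot : ∫ x, (1 / 4 * ((x a * conj (x a)) ^ 2 * prodNormSq S x)
      + 1 / 4 * ((x b * conj (x b)) ^ 2 * prodNormSq S x)
      + x a * conj (x a) * (x b * conj (x b)) * prodNormSq S x
      + 1 / 2 * ((x a * conj (x a) + x b * conj (x b))
          * (x a * conj (x b) + x b * conj (x a)) * prodNormSq S x)
      + 1 / 4 * (((x a * conj (x b)) ^ 2 + (x b * conj (x a)) ^ 2) * prodNormSq S x)) ∂μ
      = ∫ x, (x a * conj (x a)) ^ 2 * prodNormSq S x ∂μ := by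
    refine Eq.trans (integral_congr_ae (Filter.Eventually.of_forall fun x => ?_))
      (hμ.integral_comp_hadamardGate hab (by fun_prop))
    simp only [Function.update_self, Function.update_of_ne hab, prodNormSq_update ha,
      prodNormSq_update hb, mul_conj_sq_inv_sqrt_two_mul_add]
    ring
  rw [integral_add (hI ?_) (hI ?_), integral_add (hI ?_) (hI ?_), integral_add (hI ?_) (hI ?_),
    integral_add (hI ?_) (hI ?_), integral_const_mul, integral_const_mul, integral_const_mul,
    integral_const_mul, hodd₁, hodd₂, hswap] at hrot
  · linear_combination (-2) * hrot
  all_goals fun_prop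

lemma integral_prodNormSq_eq_mul [IsFiniteMeasure μ] (hsph : ∀ᵐ x ∂μ, ∑ i, ‖x i‖ ^ 2 = 1)
    (hμ : IsUnitarilyInvariant μ) {S : Finset ι} {b : ι} (hb : b ∉ S) :
    ∫ x, prodNormSq S x ∂μ = (Fintype.card ι + #S) * ∫ x, prodNormSq (insert b S) x ∂μ := by
  have hin : ∀ j ∈ S, ∫ x, x j * conj (x j) * prodNormSq S x ∂μ
      = 2 * ∫ x, prodNormSq (insert b S) x ∂μ := by
    intro j hj
    have hjS : j ∉ S.erase j := notMem_erase j S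
    have hbS : b ∉ S.erase j := fun h => hb (mem_of_mem_erase h)
    have hS : ∀ x, prodNormSq S x = x j * conj (x j) * prodNormSq (S.erase j) x := fun x => by
      rw [← prodNormSq_insert hjS, insert_erase hj]
    calc ∫ x, x j * conj (x j) * prodNormSq S x ∂μ
        = ∫ x, (x j * conj (x j)) ^ 2 * prodNormSq (S.erase j) x ∂μ := by
          congr 1; funext x
          rw [hS]
          ring
      _ = 2 * ∫ x, x j * conj (x j) * (x b * conj (x b)) * prodNormSq (S.erase j) x ∂μ :=
          integral_sq_mul_prodNormSq hsph hμ (ne_of_mem_of_not_mem hj hb) hjS hbS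
      _ = 2 * ∫ x, prodNormSq (insert b S) x ∂μ := by
          congr 2; funext x
          rw [prodNormSq_insert hb, hS]
          ring
  have hout : ∀ j ∈ Sᶜ, ∫ x, x j * conj (x j) * prodNormSq S x ∂μ
      = ∫ x, prodNormSq (insert b S) x ∂μ := by
    intro j hj
    simp_rw [prodNormSq_insert hb]
    exact integral_apply_mul_prodNormSq_eq hμ (g := fun z => z * conj z) (by fun_prop)
      (mem_compl.mp hj) hb
  rw [integral_eq_sum_integral_mul_conj_mul hsph (continuous_prodNormSq S),
    ← sum_add_sum_compl S, sum_congr rfl hin, sum_congr rfl hout, sum_const, sum_const,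
    card_compl, nsmul_eq_mul, nsmul_eq_mul, Nat.cast_sub (card_le_univ S)]
  ring

lemma ascC_mul_integral_prodNormSq [IsProbabilityMeasure μ]
    (hsph : ∀ᵐ x ∂μ, ∑ i, ‖x i‖ ^ 2 = 1) (hμ : IsUnitarilyInvariant μ) (S : Finset ι) :
    ascC (Fintype.card ι) #S * ∫ x, prodNormSq S x ∂μ = 1 := by
  induction S using Finset.induction_on with
  | empty => simp [prodNormSq, ascC]
  | insert b S hb ih =>
    rw [card_insert_of_notMem hb, ascC, prod_range_succ, ← ascC, mul_assoc,
      ← integral_prodNormSq_eq_mul hsph hμ hb, ih]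

theorem integral_prodNormSq [IsProbabilityMeasure μ] (hsph : ∀ᵐ x ∂μ, ∑ i, ‖x i‖ ^ 2 = 1)
    (hμ : IsUnitarilyInvariant μ) (S : Finset ι) :
    ∫ x, prodNormSq S x ∂μ = (ascC (Fintype.card ι) #S)⁻¹ :=
  eq_inv_of_mul_eq_one_right (ascC_mul_integral_prodNormSq hsph hμ S)

end Moments

lemma prod_ite_sub_mul_comp_perm {R κ : Type*} [CommRing R] [Fintype κ] [DecidableEq κ]
    (σ : Equiv.Perm κ) (y z : κ → R) :
    ∏ i, ((if σ i = i then 1 else 0) - y i * z (σ i))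
      = ∑ T ∈ (univ.filter fun i => σ i = i).powerset,
          (-1) ^ (Fintype.card κ - #T) * ∏ i ∈ Tᶜ, y i * z i := by
  simp_rw [sub_eq_add_neg]
  rw [Fintype.prod_add, ← sum_subset (subset_univ _)]
  · refine sum_congr rfl fun T hT => ?_
    have hfix : ∀ i ∈ T, σ i = i := fun i hi => (mem_filter.mp (mem_powerset.mp hT hi)).2
    have hσ : {i | σ i ≠ i} ⊆ (Tᶜ : Finset κ) := fun i hi =>
      mem_compl.mpr fun hiT => hi (hfix i hiT)
    rw [prod_eq_one fun i hi => if_pos (hfix i hi), one_mul, prod_neg, card_compl,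
      prod_mul_distrib, prod_mul_distrib, σ.prod_comp _ z hσ]
  · intro T _ hT
    obtain ⟨i, hiT, hi⟩ : ∃ i ∈ T, σ i ≠ i := by
      simpa [subset_iff] using hT
    rw [prod_eq_zero hiT (if_neg hi), zero_mul]

/-- For `k ≤ n`, `σ ∈ S_k` and `X` uniform on the unit sphere of `ℂ^n`,
`E[∏_{i=1}^k (δ_{i,σ(i)} - x_i conj(x_{σ(i)}))]
  = Σ_{t=0}^{fix σ} (-1)^{k-t} C(fix σ, t)/n^{↑(k-t)}`. -/
theorem sphere_ascension_moment (n k : ℕ) (hk : k ≤ n)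
    (μ : Measure (Fin n → ℂ)) (hprob : IsProbabilityMeasure μ)
    (hsupp : ∀ᵐ x ∂μ, ∑ i, ‖x i‖ ^ 2 = 1)
    (hinv : ∀ U : Matrix.unitaryGroup (Fin n) ℂ,
      MeasurePreserving (fun x : Fin n → ℂ =>
        Matrix.mulVec (U : Matrix (Fin n) (Fin n) ℂ) x) μ μ)
    (σ : Equiv.Perm (Fin k)) :
    ∫ x, ∏ i : Fin k,
        ((if σ i = i then (1 : ℂ) else 0)
          - x (Fin.castLE hk i) * (starRingEnd ℂ) (x (Fin.castLE hk (σ i)))) ∂μ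
      = ∑ t ∈ Finset.range ((Finset.univ.filter fun i => σ i = i).card + 1),
          (-1 : ℂ) ^ (k - t)
            * ((Finset.univ.filter fun i => σ i = i).card.choose t : ℂ)
            / ascC n (k - t) := by
  have hexpand : ∀ x : Fin n → ℂ, ∏ i : Fin k,
      ((if σ i = i then (1 : ℂ) else 0) - x (Fin.castLE hk i) * conj (x (Fin.castLE hk (σ i))))
        = ∑ T ∈ (univ.filter fun i => σ i = i).powerset,
            (-1) ^ (k - #T) * prodNormSq (Tᶜ.map (Fin.castLEEmb hk)) x := fun x => by
    rw [prod_ite_sub_mul_comp_perm σ (fun i => x (Fin.castLE hk i))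
      (fun i => conj (x (Fin.castLE hk i))), Fintype.card_fin]
    simp [prodNormSq, prod_map]
  simp_rw [hexpand]
  rw [integral_finsetSum _ fun T _ => (integrable_of_continuous hsupp (by fun_prop)).const_mul _]
  simp_rw [integral_const_mul, integral_prodNormSq hsupp hinv, card_map, card_compl,
    Fintype.card_fin]
  rw [sum_powerset_apply_card fun t => (-1 : ℂ) ^ (k - t) * (ascC n (k - t))⁻¹]
  refine sum_congr rfl fun t _ => ?_
  rw [nsmul_eq_mul]
  ring
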